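/- arXiv:1810.02751 — 2 statements merged into one kernel-verified Lean document; each statement's English description precedes it below -/
import Mathlib

section
/- Under the domination condition ‖Df(x)v‖·‖Df(x)^{-1}w‖ ≤ λ‖v‖·‖w‖ for v ∈ E^s_x, w ∈ Df(x)C(x), if F_1 and F_2 are d-dimensional subspaces of T_xM contained in the cone C(x) and F_2 is the graph over F_1 of a linear map L_{F_2} : F_1 → E^s_x, then for every i ≥ 1 the distance between the iterated subspaces satisfies θ_{f^i(x)}(Df^i(x)F_1, Df^i(x)F_2) ≤ λ^i · θ_x(F_1, F_2), where θ_x(F_1,F_2) := max{‖L_{F_1}‖, ‖L_{F_2}‖}. -/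
variable {E : Type*} [NormedAddCommGroup E] [NormedSpace ℝ E]

/-- `cocycle A n` represents `Df^n(x) = A (n-1) ∘ ⋯ ∘ A 0`, where `A i = Df(f^i x)`. -/
noncomputable def cocycle (A : ℕ → E →L[ℝ] E) : ℕ → E →L[ℝ] E
  | 0 => ContinuousLinearMap.id ℝ E
  | n + 1 => A n ∘L cocycle A n

/-!
Domination compares a stable vector `s` with a cone vector `w`: the ratio `‖Df s‖ / ‖Df w‖`
is at most `λ ‖s‖ / ‖w‖`. Since both the stable bundle and the cone field are invariant, the
comparison can be iterated, giving `‖Df^i s‖ / ‖Df^i w‖ ≤ λ^i ‖s‖ / ‖w‖`. Applied to `w ∈ F₁`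
and `s = L_{F₂} w`, the invariance `Df^i ∘ L_{F₂} = L^i ∘ Df^i` of the graph maps turns this
into `‖L^i (Df^i w)‖ ≤ λ^i θ ‖Df^i w‖`, and symmetrically for `L_{F₁}`.
-/

theorem cocycle_succ_apply (A : ℕ → E →L[ℝ] E) (n : ℕ) (v : E) :
    cocycle A (n + 1) v = A n (cocycle A n v) :=
  rfl

section Domination

variable {A : ℕ → E →L[ℝ] E} {S T : ℕ → Set E} {lam : ℝ}

theorem mapsTo_cocycle (h : ∀ i, Set.MapsTo (A i) (S i) (S (i + 1))) :
    ∀ n, Set.MapsTo (cocycle A n) (S 0) (S n)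
  | 0 => fun _ hv => hv
  | n + 1 => fun v hv => by
    rw [cocycle_succ_apply]
    exact h n (mapsTo_cocycle h n hv)

variable (hlam : 0 ≤ lam) (hS : ∀ i, Set.MapsTo (A i) (S i) (S (i + 1)))
  (hT : ∀ i, Set.MapsTo (A i) (T i) (T (i + 1)))
  (hdom : ∀ i, ∀ s ∈ S i, ∀ w ∈ T i, ‖A i s‖ * ‖w‖ ≤ lam * (‖s‖ * ‖A i w‖))
include hlam hS hT hdom

theorem norm_cocycle_mul_le :
    ∀ n, ∀ s ∈ S 0, ∀ w ∈ T 0, ‖cocycle A n s‖ * ‖w‖ ≤ lam ^ n * (‖s‖ * ‖cocycle A n w‖)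
  | 0, s, _, w, _ => by simp [cocycle, mul_comm]
  | n + 1, s, hs, w, hw => by
    have ih := norm_cocycle_mul_le n s hs w hw
    have step := hdom n _ (mapsTo_cocycle hS n hs) _ (mapsTo_cocycle hT n hw)
    rw [cocycle_succ_apply, cocycle_succ_apply]
    set a := ‖cocycle A n s‖
    set b := ‖cocycle A n w‖
    have hrhs : 0 ≤ lam ^ (n + 1) * (‖s‖ * ‖A n (cocycle A n w)‖) := by positivity
    rcases (norm_nonneg (cocycle A n s)).eq_or_lt with ha | ha
    · rw [eq_comm, norm_eq_zero] at ha
      simpa [ha] using hrhs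
    rcases (norm_nonneg w).eq_or_lt with hw0 | hw0
    · simpa [← hw0] using hrhs
    -- The product of `step` and `ih` carries a spare factor `a * b > 0`.
    have hb : 0 < b := by
      have := (mul_pos ha hw0).trans_le ih
      exact pos_of_mul_pos_right (pos_of_mul_pos_right this (by positivity)) (norm_nonneg s)
    have hprod := mul_le_mul step ih (by positivity) (by positivity)
    refine le_of_mul_le_mul_right ?_ (mul_pos ha hb)
    calc ‖A n (cocycle A n s)‖ * ‖w‖ * (a * b)
        = ‖A n (cocycle A n s)‖ * b * (a * ‖w‖) := by ring
      _ ≤ lam * (a * ‖A n (cocycle A n w)‖) * (lam ^ n * (‖s‖ * b)) := hprod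
      _ = lam ^ (n + 1) * (‖s‖ * ‖A n (cocycle A n w)‖) * (a * b) := by ring

theorem norm_cocycle_le_of_norm_le {θ : ℝ} {s w : E} (hs : s ∈ S 0) (hw : w ∈ T 0)
    (hsw : ‖s‖ ≤ θ * ‖w‖) (n : ℕ) :
    ‖cocycle A n s‖ ≤ lam ^ n * θ * ‖cocycle A n w‖ := by
  rcases (norm_nonneg w).eq_or_lt with hw0 | hw0
  · obtain rfl : w = 0 := norm_eq_zero.mp hw0.symm
    obtain rfl : s = 0 := norm_le_zero_iff.mp (by simpa using hsw)
    simp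
  refine le_of_mul_le_mul_right ?_ hw0
  calc ‖cocycle A n s‖ * ‖w‖ ≤ lam ^ n * (‖s‖ * ‖cocycle A n w‖) :=
        norm_cocycle_mul_le hlam hS hT hdom n s hs w hw
    _ ≤ lam ^ n * (θ * ‖w‖ * ‖cocycle A n w‖) := by gcongr
    _ = lam ^ n * θ * ‖cocycle A n w‖ * ‖w‖ := by ring

end Domination

theorem iterated_graph_distance_contraction_general
    (A : ℕ → E →L[ℝ] E)        -- A i = Df(f^i x) along the orbit of x
    (Es : ℕ → Submodule ℝ E)   -- the stable bundle along the orbit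
    (C : ℕ → Set E)            -- the cone field along the orbit
    (lam : ℝ) (hlam0 : 0 < lam)
    -- (H1): invariance of the stable bundle
    (hEs : ∀ i, Submodule.map (A i : E →ₗ[ℝ] E) (Es i) = Es (i + 1))
    -- positive invariance of the cone field
    (hC : ∀ i, A i '' C i ⊆ C (i + 1))
    -- (H4): domination, in the form `‖Df s‖·‖w‖ ≤ λ‖s‖·‖Df w‖` for `s ∈ E^s`, `w ∈ C`
    (hdom : ∀ i, ∀ s ∈ (Es i : Set E), ∀ w ∈ C i,
      ‖A i s‖ * ‖w‖ ≤ lam * (‖s‖ * ‖A i w‖))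
    (F₁ F₂ : Submodule ℝ E)
    (hF₁ : (F₁ : Set E) ⊆ C 0) (hF₂ : (F₂ : Set E) ⊆ C 0)
    -- the graph maps at each iterate: `L₂ i` realizes `Df^i F₂` as a graph over `Df^i F₁`
    (L₁ L₂ : ℕ → E →ₗ[ℝ] E)
    (hL₂range : ∀ i, ∀ v ∈ Submodule.map (cocycle A i : E →ₗ[ℝ] E) F₁, L₂ i v ∈ Es i)
    (hL₁range : ∀ i, ∀ v ∈ Submodule.map (cocycle A i : E →ₗ[ℝ] E) F₂, L₁ i v ∈ Es i)
    -- invariance of the graph maps: `Df^i ∘ L = L^i ∘ Df^i`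
    (hinv₂ : ∀ i, ∀ v ∈ F₁, cocycle A i (L₂ 0 v) = L₂ i (cocycle A i v))
    (hinv₁ : ∀ i, ∀ v ∈ F₂, cocycle A i (L₁ 0 v) = L₁ i (cocycle A i v))
    -- θ bounds `θ_x(F₁,F₂) = max{‖L_{F₁}‖,‖L_{F₂}‖}`
    (θ : ℝ)
    (hθ₂ : ∀ v ∈ F₁, ‖L₂ 0 v‖ ≤ θ * ‖v‖)
    (hθ₁ : ∀ v ∈ F₂, ‖L₁ 0 v‖ ≤ θ * ‖v‖)
    (i : ℕ) :
    (∀ v ∈ Submodule.map (cocycle A i : E →ₗ[ℝ] E) F₁, ‖L₂ i v‖ ≤ lam ^ i * θ * ‖v‖) ∧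
    (∀ v ∈ Submodule.map (cocycle A i : E →ₗ[ℝ] E) F₂, ‖L₁ i v‖ ≤ lam ^ i * θ * ‖v‖) := by
  have hEsMapsTo : ∀ j, Set.MapsTo (A j) (Es j) (Es (j + 1)) := fun j v hv =>
    hEs j ▸ Submodule.mem_map_of_mem hv
  have hCMapsTo : ∀ j, Set.MapsTo (A j) (C j) (C (j + 1)) := fun j =>
    Set.mapsTo_iff_image_subset.mpr (hC j)
  constructor
  · rintro _ ⟨w, hw, rfl⟩
    simpa only [ContinuousLinearMap.coe_coe, hinv₂ i w hw] using
      norm_cocycle_le_of_norm_le hlam0.le hEsMapsTo hCMapsTo hdom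
        (hL₂range 0 w ⟨w, hw, rfl⟩) (hF₁ hw) (hθ₂ w hw) i
  · rintro _ ⟨w, hw, rfl⟩
    simpa only [ContinuousLinearMap.coe_coe, hinv₁ i w hw] using
      norm_cocycle_le_of_norm_le hlam0.le hEsMapsTo hCMapsTo hdom
        (hL₁range 0 w ⟨w, hw, rfl⟩) (hF₂ hw) (hθ₁ w hw) i

/-- Under the domination condition (H4), if `F₁, F₂` are `d`-dimensional subspaces
contained in the cone `C(x)` and `F₂` is the graph over `F₁` of a linear map
`L₂ 0 : F₁ → E^s_x` (and `F₁` the graph of `L₁ 0 : F₂ → E^s_x`), then for every `i ≥ 1`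
`θ_{f^i(x)}(Df^i(x)F₁, Df^i(x)F₂) ≤ λ^i · θ_x(F₁,F₂)`, where
`θ_x(F₁,F₂) = max{‖L_{F₁}‖, ‖L_{F₂}‖}` is expressed via the bound `θ` on both graph maps. -/
theorem iterated_graph_distance_contraction
    (A : ℕ → E →L[ℝ] E)        -- A i = Df(f^i x) along the orbit of x
    (Es : ℕ → Submodule ℝ E)   -- the stable bundle along the orbit
    (C : ℕ → Set E)            -- the cone field along the orbit
    (lam : ℝ) (hlam0 : 0 < lam) (hlam1 : lam < 1)
    -- (H1): invariance of the stable bundle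
    (hEs : ∀ i, Submodule.map (A i : E →ₗ[ℝ] E) (Es i) = Es (i + 1))
    -- positive invariance of the cone field
    (hC : ∀ i, A i '' C i ⊆ C (i + 1))
    -- (H4): domination, in the form `‖Df s‖·‖w‖ ≤ λ‖s‖·‖Df w‖` for `s ∈ E^s`, `w ∈ C`
    (hdom : ∀ i, ∀ s ∈ (Es i : Set E), ∀ w ∈ C i,
      ‖A i s‖ * ‖w‖ ≤ lam * (‖s‖ * ‖A i w‖))
    (d : ℕ) (F₁ F₂ : Submodule ℝ E)
    (hd₁ : Module.finrank ℝ F₁ = d) (hd₂ : Module.finrank ℝ F₂ = d)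
    (hF₁ : (F₁ : Set E) ⊆ C 0) (hF₂ : (F₂ : Set E) ⊆ C 0)
    -- the graph maps at each iterate: `L₂ i` realizes `Df^i F₂` as a graph over `Df^i F₁`
    (L₁ L₂ : ℕ → E →ₗ[ℝ] E)
    (hL₂range : ∀ i, ∀ v ∈ Submodule.map (cocycle A i : E →ₗ[ℝ] E) F₁, L₂ i v ∈ Es i)
    (hL₁range : ∀ i, ∀ v ∈ Submodule.map (cocycle A i : E →ₗ[ℝ] E) F₂, L₁ i v ∈ Es i)
    (hgraph₂ : ∀ i, (Submodule.map (cocycle A i : E →ₗ[ℝ] E) F₂ : Set E)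
      = (fun v => v + L₂ i v) '' (Submodule.map (cocycle A i : E →ₗ[ℝ] E) F₁ : Set E))
    (hgraph₁ : ∀ i, (Submodule.map (cocycle A i : E →ₗ[ℝ] E) F₁ : Set E)
      = (fun v => v + L₁ i v) '' (Submodule.map (cocycle A i : E →ₗ[ℝ] E) F₂ : Set E))
    -- invariance of the graph maps: `Df^i ∘ L = L^i ∘ Df^i`
    (hinv₂ : ∀ i, ∀ v ∈ F₁, cocycle A i (L₂ 0 v) = L₂ i (cocycle A i v))
    (hinv₁ : ∀ i, ∀ v ∈ F₂, cocycle A i (L₁ 0 v) = L₁ i (cocycle A i v))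
    -- θ bounds `θ_x(F₁,F₂) = max{‖L_{F₁}‖,‖L_{F₂}‖}`
    (θ : ℝ) (hθ : 0 ≤ θ)
    (hθ₂ : ∀ v ∈ F₁, ‖L₂ 0 v‖ ≤ θ * ‖v‖)
    (hθ₁ : ∀ v ∈ F₂, ‖L₁ 0 v‖ ≤ θ * ‖v‖)
    (i : ℕ) (hi : 1 ≤ i) :
    (∀ v ∈ Submodule.map (cocycle A i : E →ₗ[ℝ] E) F₁, ‖L₂ i v‖ ≤ lam ^ i * θ * ‖v‖) ∧
    (∀ v ∈ Submodule.map (cocycle A i : E →ₗ[ℝ] E) F₂, ‖L₁ i v‖ ≤ lam ^ i * θ * ‖v‖) :=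
  iterated_graph_distance_contraction_general A Es C lam hlam0 hEs hC hdom F₁ F₂ hF₁ hF₂ L₁ L₂
    hL₂range hL₁range hinv₂ hinv₁ θ hθ₂ hθ₁ i
end

section
/- In the case d = 1: if F_1, F_2 ⊂ T_xM are one-dimensional subspaces contained in C(x), e_1 ∈ F_1 a unit vector, and F_2 is the graph of L_{F_2} : F_1 → E^s_x, then |det(Df^n(x)|_{F_2})| / |det(Df^n(x)|_{F_1})| ≤ (1 + θ_{f^n(x)}(Df^n F_1, Df^n F_2)) / (1 − θ_x(F_1,F_2)), provided θ_x(F_1,F_2) < 1. -/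
variable {E : Type*} [NormedAddCommGroup E] [NormedSpace ℝ E]

/-!
Write a vector of `F₂` as `e₁ + L₂ e₁`. Its image under `Df^n` is `Df^n e₁ + Lₙ (Df^n e₁)`, so by
the triangle inequality it has norm at most `(1 + θₙ) ‖Df^n e₁‖`, while the reverse triangle
inequality gives `‖e₁ + L₂ e₁‖ ≥ 1 - θ₀`. Dividing the two bounds gives the ratio estimate.
-/

section GraphVectors

variable {G H 𝓕 : Type*} [SeminormedAddCommGroup G] [SeminormedAddCommGroup H]
  [FunLike 𝓕 G H] [AddHomClass 𝓕 G H]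

theorem norm_map_add_le_one_add_mul (T : 𝓕) {u w : G} {θ : ℝ} (hw : ‖T w‖ ≤ θ * ‖T u‖) :
    ‖T (u + w)‖ ≤ (1 + θ) * ‖T u‖ :=
  calc ‖T (u + w)‖ ≤ ‖T u‖ + ‖T w‖ := by rw [map_add]; exact norm_add_le _ _
    _ ≤ (1 + θ) * ‖T u‖ := by linarith

theorem one_sub_mul_norm_le_norm_add {u w : G} {θ : ℝ} (hw : ‖w‖ ≤ θ * ‖u‖) :
    (1 - θ) * ‖u‖ ≤ ‖u + w‖ := by
  have h := norm_sub_norm_le u (-w)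
  rw [sub_neg_eq_add, norm_neg] at h
  linarith

theorem norm_map_add_div_norm_add_le (T : 𝓕) {u w : G} {θ₀ θ : ℝ} (hu : 0 < ‖u‖)
    (hθ₀ : θ₀ < 1) (hw : ‖w‖ ≤ θ₀ * ‖u‖) (hTw : ‖T w‖ ≤ θ * ‖T u‖) :
    ‖T (u + w)‖ / ‖u + w‖ ≤ (1 + θ) / (1 - θ₀) * (‖T u‖ / ‖u‖) := by
  have hnum := norm_map_add_le_one_add_mul T hTw
  calc ‖T (u + w)‖ / ‖u + w‖ ≤ (1 + θ) * ‖T u‖ / ((1 - θ₀) * ‖u‖) :=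
        div_le_div₀ ((norm_nonneg _).trans hnum) hnum
          (mul_pos (sub_pos.mpr hθ₀) hu) (one_sub_mul_norm_le_norm_add hw)
    _ = (1 + θ) / (1 - θ₀) * (‖T u‖ / ‖u‖) := (div_mul_div_comm _ _ _ _).symm

end GraphVectors

theorem one_dimensional_determinant_ratio_general
    (A : ℕ → E →L[ℝ] E)        -- A i = Df(f^i x)
    (F₁ : Submodule ℝ E)
    (e₁ : E) (he₁ : e₁ ∈ F₁) (he₁norm : ‖e₁‖ = 1)
    (L₂ Ln : E →ₗ[ℝ] E) (n : ℕ)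
    -- invariance: Df^n ∘ L₂ = Lₙ ∘ Df^n on F₁
    (hconj : cocycle A n (L₂ e₁) = Ln (cocycle A n e₁))
    (θ₀ θn : ℝ) (hθ₀1 : θ₀ < 1)
    (hθ₀ : ∀ v ∈ F₁, ‖L₂ v‖ ≤ θ₀ * ‖v‖)
    (hθn : ‖Ln (cocycle A n e₁)‖ ≤ θn * ‖cocycle A n e₁‖) :
    ‖cocycle A n (e₁ + L₂ e₁)‖ / ‖e₁ + L₂ e₁‖
      ≤ (1 + θn) / (1 - θ₀) * ‖cocycle A n e₁‖ := by
  have h := norm_map_add_div_norm_add_le (cocycle A n) (he₁norm ▸ one_pos) hθ₀1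
    (hθ₀ e₁ he₁) (hconj ▸ hθn)
  rwa [he₁norm, div_one] at h

/-- Case `d = 1`: if `F₁, F₂` are one-dimensional subspaces contained in `C(x)`,
`e₁ ∈ F₁` is a unit vector and `F₂ = graph(L₂)` for `L₂ : F₁ → E^s_x`, then
`|det(Df^n(x)|_{F₂})| / |det(Df^n(x)|_{F₁})| ≤ (1 + θₙ)/(1 − θ₀)`
where `θ₀ = θ_x(F₁,F₂)` (assumed `< 1`) and `θₙ = θ_{f^n(x)}(Df^n F₁, Df^n F₂)`.
Here `|det(Df^n|_{F})| = ‖Df^n e‖` for a unit vector `e ∈ F`, so the left-hand side is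
`‖Df^n(e₁+L₂e₁)‖ / ‖e₁+L₂e₁‖` divided by `‖Df^n e₁‖`. -/
theorem one_dimensional_determinant_ratio
    (A : ℕ → E →L[ℝ] E)        -- A i = Df(f^i x)
    (Es : ℕ → Submodule ℝ E)   -- stable bundle along the orbit
    (C : ℕ → Set E)            -- cone field along the orbit
    (hC : ∀ i, A i '' C i ⊆ C (i + 1))
    (hEs : ∀ i, Submodule.map (A i : E →ₗ[ℝ] E) (Es i) = Es (i + 1))
    (F₁ F₂ : Submodule ℝ E)
    (hd₁ : Module.finrank ℝ F₁ = 1) (hd₂ : Module.finrank ℝ F₂ = 1)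
    (hF₁ : (F₁ : Set E) ⊆ C 0) (hF₂ : (F₂ : Set E) ⊆ C 0)
    (e₁ : E) (he₁ : e₁ ∈ F₁) (he₁norm : ‖e₁‖ = 1)
    (L₂ Ln : E →ₗ[ℝ] E) (n : ℕ)
    (hL₂Es : L₂ e₁ ∈ Es 0)
    -- F₂ is the graph of L₂ over F₁
    (hgraph : (F₂ : Set E) = (fun v => v + L₂ v) '' (F₁ : Set E))
    -- invariance: Df^n ∘ L₂ = Lₙ ∘ Df^n on F₁
    (hconj : cocycle A n (L₂ e₁) = Ln (cocycle A n e₁))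
    (θ₀ θn : ℝ) (hθ₀0 : 0 ≤ θ₀) (hθ₀1 : θ₀ < 1) (hθn0 : 0 ≤ θn)
    (hθ₀ : ∀ v ∈ F₁, ‖L₂ v‖ ≤ θ₀ * ‖v‖)
    (hθn : ‖Ln (cocycle A n e₁)‖ ≤ θn * ‖cocycle A n e₁‖) :
    ‖cocycle A n (e₁ + L₂ e₁)‖ / ‖e₁ + L₂ e₁‖
      ≤ (1 + θn) / (1 - θ₀) * ‖cocycle A n e₁‖ :=
  one_dimensional_determinant_ratio_general A F₁ e₁ he₁ he₁norm L₂ Ln n hconj θ₀ θn hθ₀1 hθ₀ hθn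
end
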